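/- In generalized Frank-Wolfe with adaptive stepsize α_k = min{1, (1/(L_f+σ_g))(S_k/r_k + σ_g/2)} where r_k = ||p^(k) - x^(k)||² and σ_g > 0, the per-iteration decrease satisfies F(x^(k)) - F(x^(k+1)) ≥ ω S(x^(k)) with ω = σ_g/(L_f + σ_g), hence min_{0≤i≤k} S(x^(i)) ≤ Δ₀/(ω(k+1)). -/

import Mathlib

open scoped RealInnerProductSpace
open Filter Topology
set_option maxHeartbeats 1000000

lemma descent_lemma {m : ℕ} {D : Set (EuclideanSpace ℝ (Fin m))}
    {f : EuclideanSpace ℝ (Fin m) → ℝ}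
    {f' : EuclideanSpace ℝ (Fin m) → EuclideanSpace ℝ (Fin m)}
    {Lf : ℝ} (hDconv : Convex ℝ D)
    (hdiff : ∀ x ∈ D, HasGradientAt f (f' x) x)
    (hconc : ConcaveOn ℝ D (fun x => f x - Lf / 2 * ‖x‖ ^ 2))
    {x y : EuclideanSpace ℝ (Fin m)} (hx : x ∈ D) (hy : y ∈ D) :
    f y ≤ f x + ⟪f' x, y - x⟫ + Lf / 2 * ‖y - x‖ ^ 2 := by
  set v := y - x with hv
  have hxy : x + v = y := by rw [hv]; abel
  set φ : ℝ → ℝ := fun t => f (x + t • v) - Lf / 2 * ‖x + t • v‖ ^ 2 with hφdef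
  set d : ℝ := ⟪f' x, v⟫ - Lf * ⟪x, v⟫ with hd
  -- derivative of φ at 0
  have hγ : HasDerivAt (fun t : ℝ => x + t • v) v 0 := by
    simpa using ((hasDerivAt_id (0:ℝ)).smul_const v).const_add x
  have h1 : HasDerivAt (fun t : ℝ => f (x + t • v)) ⟪f' x, v⟫ 0 := by
    have h0 : HasFDerivAt f (InnerProductSpace.toDual ℝ _ (f' x)) x := (hdiff x hx).hasFDerivAt
    have h0' : HasFDerivAt f (InnerProductSpace.toDual ℝ _ (f' x)) ((fun t : ℝ => x + t • v) 0) := by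
      simpa using h0
    simpa [InnerProductSpace.toDual_apply_apply, Function.comp_def] using h0'.comp_hasDerivAt 0 hγ
  have hfun : (fun t : ℝ => Lf / 2 * ‖x + t • v‖ ^ 2)
      = fun t => Lf / 2 * (‖x‖ ^ 2 + 2 * (t * ⟪x, v⟫) + t ^ 2 * ‖v‖ ^ 2) := by
    funext t
    rw [norm_add_sq_real, real_inner_smul_right, norm_smul, mul_pow, Real.norm_eq_abs, sq_abs]
  have h2 : HasDerivAt (fun t : ℝ => Lf / 2 * ‖x + t • v‖ ^ 2) (Lf * ⟪x, v⟫) 0 := by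
    rw [hfun]
    have ha : HasDerivAt (fun t : ℝ => ‖x‖ ^ 2 + 2 * (t * ⟪x, v⟫) + t ^ 2 * ‖v‖ ^ 2)
        (2 * ⟪x, v⟫) 0 := by
      have hb := (((hasDerivAt_id (0:ℝ)).mul_const ⟪x, v⟫).const_mul 2).const_add (‖x‖ ^ 2)
      have hp := (hasDerivAt_pow 2 (0:ℝ)).mul_const (‖v‖ ^ 2)
      simpa [Pi.add_def] using hb.add hp
    have := ha.const_mul (Lf / 2)
    convert this using 1
    · rfl
    · rfl
    ring
  have hφ : HasDerivAt φ d 0 := h1.sub h2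
  -- slope inequality from concavity
  have hslope : ∀ t : ℝ, t ∈ Set.Ioc (0:ℝ) 1 → φ 1 - φ 0 ≤ slope φ 0 t := by
    intro t ht
    have hc := hconc.2 hx hy (by linarith [ht.2] : (0:ℝ) ≤ 1 - t) ht.1.le (by ring)
    have hcomb : (1 - t) • x + t • y = x + t • v := by rw [hv]; module
    rw [hcomb] at hc
    have hφt : (1 - t) * φ 0 + t * φ 1 ≤ φ t := by
      simpa [hφdef, smul_eq_mul, hxy] using hc
    rw [slope_def_field, sub_zero, le_div_iff₀ ht.1]
    nlinarith [hφt]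
  -- derivative dominates the chord
  have hle : φ 1 - φ 0 ≤ d := by
    have htend : Tendsto (slope φ 0) (𝓝[>] (0:ℝ)) (𝓝 d) :=
      (hasDerivAt_iff_tendsto_slope.mp hφ).mono_left
        (nhdsWithin_mono _ (fun t ht => ne_of_gt ht))
    refine ge_of_tendsto htend ?_
    filter_upwards [Ioc_mem_nhdsGT_of_mem (Set.left_mem_Ico.mpr one_pos)] with t ht
    exact hslope t ht
  have hφ0 : φ 0 = f x - Lf / 2 * ‖x‖ ^ 2 := by simp only [hφdef]; rw [zero_smul, add_zero]
  have hφ1 : φ 1 = f y - Lf / 2 * ‖y‖ ^ 2 := by simp only [hφdef]; rw [one_smul, hxy]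
  have hnorm : ‖v‖ ^ 2 = ‖y‖ ^ 2 - 2 * ⟪x, y⟫ + ‖x‖ ^ 2 := by
    rw [hv, norm_sub_sq_real, real_inner_comm]
    try ring
  have hinner : ⟪x, v⟫ = ⟪x, y⟫ - ‖x‖ ^ 2 := by
    rw [hv, inner_sub_right, real_inner_self_eq_norm_sq]
  rw [hφ0, hφ1, hd, hinner] at hle
  have h3 : Lf / 2 * ‖v‖ ^ 2 = Lf / 2 * (‖y‖ ^ 2 - 2 * ⟪x, y⟫ + ‖x‖ ^ 2) := by rw [hnorm]
  ring_nf at h3 hle ⊢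
  linarith [hle, h3]
open Finset in
/-- Generalized Frank-Wolfe with the adaptive stepsize and strongly convex `g`:
per-iteration decrease `F(x⁽ᵏ⁾) - F(x⁽ᵏ⁺¹⁾) ≥ ω S(x⁽ᵏ⁾)` with
`ω = σ_g/(L_f+σ_g)`, hence `min_{0 ≤ i ≤ k} S(x⁽ⁱ⁾) ≤ Δ₀/(ω(k+1))`. -/
theorem generalized_FW_adaptive_stepsize {m : ℕ}
    {D S : Set (EuclideanSpace ℝ (Fin m))}
    {f g : EuclideanSpace ℝ (Fin m) → ℝ}
    {f' : EuclideanSpace ℝ (Fin m) → EuclideanSpace ℝ (Fin m)}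
    {Lf σg Fstar : ℝ} (hLf : 0 ≤ Lf) (hσg : 0 < σg)
    (hDopen : IsOpen D) (hDconv : Convex ℝ D)
    (hdiff : ∀ x ∈ D, HasGradientAt f (f' x) x)
    (hconc : ConcaveOn ℝ D (fun x => f x - Lf / 2 * ‖x‖ ^ 2))
    (hScompact : IsCompact S) (hSconv : Convex ℝ S) (hSD : S ⊆ D)
    (hstrong : ConvexOn ℝ S (fun x => g x - σg / 2 * ‖x‖ ^ 2))
    (hFstar : IsLeast ((fun z => f z + g z) '' S) Fstar)
    {x p : ℕ → EuclideanSpace ℝ (Fin m)} {α : ℕ → ℝ}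
    (hx0 : x 0 ∈ S)
    (hpS : ∀ k, p k ∈ S)
    (hpmin : ∀ k, ∀ q ∈ S,
      ⟪f' (x k), p k⟫ + g (p k) ≤ ⟪f' (x k), q⟫ + g q)
    (hstep : ∀ k, α k = min 1 (1 / (Lf + σg) *
      ((⟪f' (x k), x k - p k⟫ + g (x k) - g (p k)) / ‖p k - x k‖ ^ 2
        + σg / 2)))
    (hupdate : ∀ k, x (k + 1) = x k + α k • (p k - x k)) :
    (∀ k : ℕ,
      σg / (Lf + σg) * (⟪f' (x k), x k - p k⟫ + g (x k) - g (p k)) ≤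
        (f (x k) + g (x k)) - (f (x (k + 1)) + g (x (k + 1)))) ∧
    ∀ k : ℕ, ∃ i ≤ k,
      ⟪f' (x i), x i - p i⟫ + g (x i) - g (p i) ≤
        (f (x 0) + g (x 0) - Fstar) / (σg / (Lf + σg) * (k + 1)) := by
  have hLσ : (0:ℝ) < Lf + σg := by linarith
  have hstrong' := (strongConvexOn_iff_convex.mpr hstrong).2
  -- S_k ≥ 0 when x k ∈ S
  have hSnn : ∀ k, x k ∈ S → 0 ≤ ⟪f' (x k), x k - p k⟫ + g (x k) - g (p k) := by
    intro k hk
    have := hpmin k (x k) hk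
    rw [inner_sub_right]
    linarith
  -- stepsizes in [0,1] and iterates stay in S
  have hα01 : ∀ k, x k ∈ S → 0 ≤ α k ∧ α k ≤ 1 := by
    intro k hk
    constructor
    · rw [hstep k]
      refine le_min one_pos.le ?_
      have h1 : (0:ℝ) ≤ (⟪f' (x k), x k - p k⟫ + g (x k) - g (p k)) / ‖p k - x k‖ ^ 2 :=
        div_nonneg (hSnn k hk) (by positivity)
      have h2 : (0:ℝ) ≤ σg / 2 := by linarith
      positivity
    · rw [hstep k]; exact min_le_left _ _
  have hxS : ∀ k, x k ∈ S := by
    intro k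
    induction k with
    | zero => exact hx0
    | succ n ih =>
      obtain ⟨h0, h1⟩ := hα01 n ih
      rw [hupdate n]
      have hc : x n + α n • (p n - x n) = (1 - α n) • x n + α n • p n := by module
      rw [hc]
      exact hSconv ih (hpS n) (by linarith) h0 (by ring)
  -- per-iteration decrease
  have key : ∀ k : ℕ,
      σg / (Lf + σg) * (⟪f' (x k), x k - p k⟫ + g (x k) - g (p k)) ≤
        (f (x k) + g (x k)) - (f (x (k + 1)) + g (x (k + 1))) := by
    intro k
    obtain ⟨hα0, hα1⟩ := hα01 k (hxS k)
    set a := x k with ha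
    set q := p k with hq
    set t := α k with htdef
    set Sv : ℝ := ⟪f' a, a - q⟫ + g a - g q with hSv
    set r : ℝ := ‖q - a‖ ^ 2 with hr
    have hSv0 : 0 ≤ Sv := hSnn k (hxS k)
    have hr0 : 0 ≤ r := by positivity
    -- smoothness bound on f
    have hfb : f (x (k+1)) ≤ f a + t * ⟪f' a, q - a⟫ + Lf / 2 * (t ^ 2 * r) := by
      have hd := descent_lemma hDconv hdiff hconc (hSD (hxS k)) (hSD (hxS (k+1)))
      rw [hupdate k] at hd ⊢
      have h1 : a + t • (q - a) - a = t • (q - a) := by abel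
      rw [h1, real_inner_smul_right, norm_smul, mul_pow, Real.norm_eq_abs, sq_abs] at hd
      rw [← ha, ← hq, ← htdef, ← hr] at hd
      linarith [hd]
    -- strong convexity bound on g
    have hgb : g (x (k+1)) ≤ (1 - t) * g a + t * g q - (1 - t) * t * (σg / 2 * r) := by
      have hc := hstrong' (hxS k) (hpS k) (by linarith : (0:ℝ) ≤ 1 - t) hα0 (by ring)
      have hcomb : (1 - t) • a + t • q = x (k+1) := by rw [hupdate k]; module
      rw [hcomb] at hc
      have hnr : ‖a - q‖ = ‖q - a‖ := norm_sub_rev _ _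
      simpa [smul_eq_mul, hnr, hr, ← ha, ← hq] using hc
    have hip : ⟪f' a, q - a⟫ = -(⟪f' a, a - q⟫) := by
      rw [← inner_neg_right, neg_sub]
    -- combined decrease bound
    have hdec : t * Sv - Lf / 2 * (t ^ 2 * r) - t * (σg / 2 * r) * t + t * (σg / 2 * r)
        ≤ (f a + g a) - (f (x (k+1)) + g (x (k+1))) := by
      rw [hip] at hfb
      nlinarith [hfb, hgb]
    refine le_trans ?_ hdec
    -- algebraic core
    rw [hstep k, ← ha, ← hq, ← hSv, ← hr] at htdef
    rcases eq_or_lt_of_le hr0 with hreq | hrpos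
    · have hq0 : q = a := by
        have : ‖q - a‖ = 0 := by
          have := hreq.symm
          nlinarith [norm_nonneg (q - a), this]
        rw [norm_eq_zero, sub_eq_zero] at this; exact this
      have hSveq : Sv = 0 := by
        rw [hSv, hq0]
        simp
      rw [hSveq, ← hreq]
      ring_nf
      rfl
    · rcases le_total (1 / (Lf + σg) * (Sv / r + σg / 2)) 1 with hcle | hcge
      · rw [min_eq_right hcle] at htdef
        have hceq : t * ((Lf + σg) * r) = Sv + σg / 2 * r := by
          rw [htdef]
          field_simp
        rw [div_mul_eq_mul_div, div_le_iff₀ hLσ]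
        nlinarith [hceq, sq_nonneg (Sv - σg / 2 * r), hrpos, hLσ, mul_pos hLσ hrpos, hSv0, hα0]
      · rw [min_eq_left hcge] at htdef
        have hSge : (Lf + σg / 2) * r ≤ Sv := by
          have h2 : (Lf + σg) * 1 ≤ (Lf + σg) * (1 / (Lf + σg) * (Sv / r + σg / 2)) :=
            mul_le_mul_of_nonneg_left hcge hLσ.le
          rw [mul_one, ← mul_assoc, mul_one_div, div_self hLσ.ne', one_mul] at h2
          have h3 := mul_le_mul_of_nonneg_right h2 hr0
          have h4 : (Sv / r + σg / 2) * r = Sv + σg / 2 * r := by field_simp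
          rw [h4] at h3
          linarith
        rw [htdef, div_mul_eq_mul_div, div_le_iff₀ hLσ]
        nlinarith [hSge, mul_nonneg hLf (mul_nonneg hLf hr0), mul_nonneg hLf hSv0,
          mul_nonneg hLf hr0, mul_nonneg (mul_nonneg hσg.le hLf) hr0]
  refine ⟨key, ?_⟩
  intro k
  obtain ⟨i, hik, hmin⟩ := Finset.exists_min_image (Finset.range (k+1))
    (fun j => ⟪f' (x j), x j - p j⟫ + g (x j) - g (p j)) ⟨0, by simp⟩
  refine ⟨i, Nat.lt_succ_iff.mp (Finset.mem_range.mp hik), ?_⟩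
  set ω : ℝ := σg / (Lf + σg) with hω
  have hωpos : 0 < ω := div_pos hσg hLσ
  have htel : ∑ j ∈ Finset.range (k+1),
      ((f (x j) + g (x j)) - (f (x (j+1)) + g (x (j+1))))
      = (f (x 0) + g (x 0)) - (f (x (k+1)) + g (x (k+1))) :=
    Finset.sum_range_sub' (fun j => f (x j) + g (x j)) (k+1)
  have hsum : ω * ((k+1 : ℝ) * (⟪f' (x i), x i - p i⟫ + g (x i) - g (p i)))
      ≤ (f (x 0) + g (x 0)) - (f (x (k+1)) + g (x (k+1))) := by
    rw [← htel]
    calc ω * ((k+1 : ℝ) * (⟪f' (x i), x i - p i⟫ + g (x i) - g (p i)))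
        = ∑ j ∈ Finset.range (k+1), ω * (⟪f' (x i), x i - p i⟫ + g (x i) - g (p i)) := by
          rw [Finset.sum_const, Finset.card_range, nsmul_eq_mul]
          push_cast; ring
      _ ≤ ∑ j ∈ Finset.range (k+1), ω * (⟪f' (x j), x j - p j⟫ + g (x j) - g (p j)) := by
          refine Finset.sum_le_sum fun j hj => ?_
          exact mul_le_mul_of_nonneg_left (hmin j hj) hωpos.le
      _ ≤ _ := Finset.sum_le_sum fun j _ => key j
  have hF : Fstar ≤ f (x (k+1)) + g (x (k+1)) := hFstar.2 ⟨x (k+1), hxS (k+1), rfl⟩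
  rw [le_div_iff₀ (by positivity : (0:ℝ) < ω * (k+1))]
  nlinarith [hsum, hF]
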